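/- Axiom DC-M forces the strict separability condition (second part of SEP): suppose that Axiom DC-M holds for P⁺ under likelihood updating (for all menus). Then for every menu M, every act f ∈ M, and all events E, F ⊆ S with ūP(E∩F) > 0 and ūP(Eᶜ∩F) > 0: if regret_M^{P⁺|ˡ(E∩F)}(f) > 0, then regret_M^{P⁺|ˡF}(f) > sup_{(Pr,α)∈P⁺|ˡF} α·Pr(Eᶜ∩F)·regret_M^{P⁺|ˡ(Eᶜ∩F)}(f). -/
import Mathlib


open scoped BigOperators

noncomputable section

variable {S : Type*}

/-- `Pr : S → ℝ` is a probability measure on the finite state space `S`. -/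
def IsProb [Fintype S] (Pr : S → ℝ) : Prop :=
  (∀ s, 0 ≤ Pr s) ∧ (∑ s, Pr s) = 1

/-- A set of weighted probability measures: each element is a pair `(Pr, α)` with `Pr`
a probability measure and `α ∈ [0,1]`, with at most one weight per measure. -/
def IsWeightedSet [Fintype S] (W : Set ((S → ℝ) × ℝ)) : Prop :=
  (∀ w ∈ W, IsProb w.1 ∧ w.2 ∈ Set.Icc (0 : ℝ) 1) ∧
    ∀ w ∈ W, ∀ w' ∈ W, w.1 = w'.1 → w.2 = w'.2

/-- The regret of act `f` at state `s` with respect to menu `M`: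
`(max_{g ∈ M} g s) - f s`. -/
def regretAt (M : Finset (S → ℝ)) (f : S → ℝ) (s : S) : ℝ :=
  sSup ((fun g => g s) '' (M : Set (S → ℝ))) - f s

/-- The maximum weighted expected regret of `f` with respect to menu `M` and the
weighted set `W` of probability measures (it is `0` when `W = ∅`, since `sSup ∅ = 0`
for real numbers). -/
def wregret [Fintype S] (W : Set ((S → ℝ) × ℝ)) (M : Finset (S → ℝ)) (f : S → ℝ) : ℝ :=
  sSup {x | ∃ w ∈ W, x = w.2 * ∑ s, w.1 s * regretAt M f s}

/-- `C(P⁺)`: the set of subprobability vectors dominated by some weighted measure in `W`. -/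
def Cset (W : Set ((S → ℝ) × ℝ)) : Set (S → ℝ) :=
  {p | (∀ s, 0 ≤ p s) ∧ ∃ w ∈ W, ∀ s, p s ≤ w.2 * w.1 s}

/-- The probability of the event `E` under `Pr`. -/
def probOf (Pr : S → ℝ) (E : Finset S) : ℝ := ∑ s ∈ E, Pr s

/-- The conditional probability measure `Pr(· | E)`. -/
def condProb [DecidableEq S] (Pr : S → ℝ) (E : Finset S) : S → ℝ :=
  fun s => if s ∈ E then Pr s / probOf Pr E else 0

/-- Prior-by-prior updating: `P⁺|ᵖE = {(Pr|E, α) : (Pr,α) ∈ P⁺, Pr(E) > 0}`. -/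
def updP [DecidableEq S] (W : Set ((S → ℝ) × ℝ)) (E : Finset S) : Set ((S → ℝ) × ℝ) :=
  {w' | ∃ w ∈ W, 0 < probOf w.1 E ∧ w' = (condProb w.1 E, w.2)}

/-- `ūP(E) = sup {α·Pr(E) : (Pr,α) ∈ P⁺}`. -/
def ubar (W : Set ((S → ℝ) × ℝ)) (E : Finset S) : ℝ :=
  sSup {x | ∃ w ∈ W, x = w.2 * probOf w.1 E}

/-- The likelihood-updated weight `αˡ_E` of the measure `Pr|E`:
`sup {α′·Pr′(E)/ūP(E) : (Pr′,α′) ∈ P⁺, Pr′|E = Pr|E}`. -/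
def alphaL [DecidableEq S] (W : Set ((S → ℝ) × ℝ)) (E : Finset S) (Pr : S → ℝ) : ℝ :=
  sSup {x | ∃ w ∈ W, condProb w.1 E = condProb Pr E ∧ x = w.2 * probOf w.1 E / ubar W E}

/-- Likelihood updating: `P⁺|ˡE = {(Pr|E, αˡ_E) : (Pr,α) ∈ P⁺, Pr(E) > 0}`. -/
def updL [DecidableEq S] (W : Set ((S → ℝ) × ℝ)) (E : Finset S) : Set ((S → ℝ) × ℝ) :=
  {w' | ∃ w ∈ W, 0 < probOf w.1 E ∧ w' = (condProb w.1 E, alphaL W E w.1)} 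

/-- The MWER choice set: those `f ∈ M'` minimizing `wregret W M` over `M'`; regret is
computed with respect to the reference menu `M` and beliefs `W`. -/
def choiceSet [Fintype S] (M : Finset (S → ℝ)) (W : Set ((S → ℝ) × ℝ))
    (M' : Finset (S → ℝ)) : Set (S → ℝ) :=
  {f | f ∈ M' ∧ ∀ g ∈ M', wregret W M f ≤ wregret W M g}

/-- The maximum weighted expected value `Ē_{W}(θ) = sup_{(Pr,α) ∈ W} α·Σ_s Pr(s)·θ(s)`. -/
def Ebar [Fintype S] (W : Set ((S → ℝ) × ℝ)) (θ : S → ℝ) : ℝ :=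
  sSup {x | ∃ w ∈ W, x = w.2 * ∑ s, w.1 s * θ s}

/-- Axiom DC-M for the weighted set `W` under the updating rule `upd`. -/
def DCM [Fintype S] [DecidableEq S]
    (upd : Set ((S → ℝ) × ℝ) → Finset S → Set ((S → ℝ) × ℝ))
    (W : Set ((S → ℝ) × ℝ)) : Prop :=
  ∀ (E F : Finset S) (M M' : Finset (S → ℝ)), M.Nonempty → M' ⊆ M →
    ∀ f ∈ M', ∀ g ∈ M',
      f ∈ choiceSet M (upd W (E ∩ F)) M' → f ∈ choiceSet M (upd W (Eᶜ ∩ F)) M' →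
        f ∈ choiceSet M (upd W F) M' ∧
          (g ∉ choiceSet M (upd W (E ∩ F)) M' → g ∉ choiceSet M (upd W F) M')

/-- Separability (SEP) of the weighted regret of `f` with respect to menu `M` and the
weighted set `W`, under the updating rule `upd`. -/
def Separable [Fintype S] [DecidableEq S]
    (upd : Set ((S → ℝ) × ℝ) → Finset S → Set ((S → ℝ) × ℝ))
    (W : Set ((S → ℝ) × ℝ)) (M : Finset (S → ℝ)) (f : S → ℝ) : Prop :=
  ∀ E F : Finset S, 0 < ubar W (E ∩ F) → 0 < ubar W (Eᶜ ∩ F) →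
    (wregret (upd W F) M f =
      sSup {x | ∃ w ∈ upd W F, x =
        w.2 * (probOf w.1 (E ∩ F) * wregret (upd W (E ∩ F)) M f +
          probOf w.1 (Eᶜ ∩ F) * wregret (upd W (Eᶜ ∩ F)) M f)}) ∧
    (wregret (upd W (E ∩ F)) M f ≠ 0 →
      sSup {x | ∃ w ∈ upd W F, x =
        w.2 * probOf w.1 (Eᶜ ∩ F) * wregret (upd W (Eᶜ ∩ F)) M f} <
        wregret (upd W F) M f)

/-- `p`-rectangularity of the weighted set `W` (prior-by-prior updating; the updated
weights equal the original weights). -/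
def pRectangular [Fintype S] [DecidableEq S] (W : Set ((S → ℝ) × ℝ)) : Prop :=
  ∀ E F : Finset S,
    (∀ w₁ ∈ W, ∀ w₂ ∈ W, ∀ w₃ ∈ W,
      0 < probOf w₁.1 (E ∩ F) → 0 < probOf w₂.1 (Eᶜ ∩ F) →
      (fun s => w₃.2 * probOf w₃.1 (E ∩ F) * (w₁.2 * condProb w₁.1 (E ∩ F) s) +
          w₃.2 * probOf w₃.1 (Eᶜ ∩ F) * (w₂.2 * condProb w₂.1 (Eᶜ ∩ F) s)) ∈
        closure (Cset (updP W F))) ∧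
    (∀ δ : ℝ, 0 < δ → 0 < ubar W F →
      ∃ w ∈ updP W F,
        sSup {x | ∃ w' ∈ W, x = w'.2 * probOf w'.1 (Eᶜ ∩ F)} <
          w.2 * (δ * probOf w.1 (E ∩ F) + probOf w.1 (Eᶜ ∩ F))) ∧
    (∀ θ : S → ℝ, (∀ s, 0 ≤ θ s) →
      Ebar (updP W F) θ ≤
        sSup {x | ∃ w ∈ updP W F, x =
          w.2 * (probOf w.1 (E ∩ F) * Ebar (updP W (E ∩ F)) θ +
            probOf w.1 (Eᶜ ∩ F) * Ebar (updP W (Eᶜ ∩ F)) θ)})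

/-- `l`-rectangularity of the weighted set `W` (likelihood updating; the updated
weights are the likelihood-updated weights `αˡ`). -/
def lRectangular [Fintype S] [DecidableEq S] (W : Set ((S → ℝ) × ℝ)) : Prop :=
  ∀ E F : Finset S,
    (∀ w₁ ∈ W, ∀ w₂ ∈ W, ∀ w₃ ∈ W,
      0 < probOf w₁.1 (E ∩ F) → 0 < probOf w₂.1 (Eᶜ ∩ F) →
      (fun s => w₃.2 * probOf w₃.1 (E ∩ F) * (alphaL W (E ∩ F) w₁.1 * condProb w₁.1 (E ∩ F) s) +
          w₃.2 * probOf w₃.1 (Eᶜ ∩ F) * (alphaL W (Eᶜ ∩ F) w₂.1 * condProb w₂.1 (Eᶜ ∩ F) s)) ∈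
        closure (Cset (updL W F))) ∧
    (∀ δ : ℝ, 0 < δ → 0 < ubar W F →
      ∃ w ∈ updL W F,
        sSup {x | ∃ w' ∈ W, x = w'.2 * probOf w'.1 (Eᶜ ∩ F)} <
          w.2 * (δ * probOf w.1 (E ∩ F) + probOf w.1 (Eᶜ ∩ F))) ∧
    (∀ θ : S → ℝ, (∀ s, 0 ≤ θ s) →
      Ebar (updL W F) θ ≤
        sSup {x | ∃ w ∈ updL W F, x =
          w.2 * (probOf w.1 (E ∩ F) * Ebar (updL W (E ∩ F)) θ +
            probOf w.1 (Eᶜ ∩ F) * Ebar (updL W (Eᶜ ∩ F)) θ)})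


section Aux

variable [Fintype S] [DecidableEq S]

private lemma probOf_nonneg' {Pr : S → ℝ} (h : ∀ s, 0 ≤ Pr s) (E : Finset S) :
    0 ≤ probOf Pr E :=
  Finset.sum_nonneg fun s _ => h s

private lemma probOf_le_one' {Pr : S → ℝ} (h : IsProb Pr) (E : Finset S) :
    probOf Pr E ≤ 1 := by
  rw [← h.2]
  exact Finset.sum_le_sum_of_subset_of_nonneg (Finset.subset_univ E) fun s _ _ => h.1 s

private lemma ubar_elem_le_one {W : Set ((S → ℝ) × ℝ)} (hW : IsWeightedSet W)
    (E : Finset S) : ∀ x ∈ {x | ∃ w ∈ W, x = w.2 * probOf w.1 E}, x ≤ 1 := by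
  rintro x ⟨w, hw, rfl⟩
  obtain ⟨hp, hα⟩ := hW.1 w hw
  have h1 := probOf_le_one' hp E
  have h2 := probOf_nonneg' hp.1 E
  nlinarith [hα.1, hα.2]

private lemma ubar_nonneg' {W : Set ((S → ℝ) × ℝ)} (hW : IsWeightedSet W)
    (E : Finset S) : 0 ≤ ubar W E := by
  apply Real.sSup_nonneg
  rintro x ⟨w, hw, rfl⟩
  exact mul_nonneg (hW.1 w hw).2.1 (probOf_nonneg' (hW.1 w hw).1.1 E)

private lemma alphaL_nonneg' {W : Set ((S → ℝ) × ℝ)} (hW : IsWeightedSet W)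
    (E : Finset S) (Pr : S → ℝ) : 0 ≤ alphaL W E Pr := by
  apply Real.sSup_nonneg
  rintro x ⟨w, hw, -, rfl⟩
  exact div_nonneg (mul_nonneg (hW.1 w hw).2.1 (probOf_nonneg' (hW.1 w hw).1.1 E))
    (ubar_nonneg' hW E)

private lemma alphaL_le_one' {W : Set ((S → ℝ) × ℝ)} (hW : IsWeightedSet W)
    {E : Finset S} (hub : 0 < ubar W E) (Pr : S → ℝ) : alphaL W E Pr ≤ 1 := by
  apply Real.sSup_le _ zero_le_one
  rintro x ⟨w, hw, -, rfl⟩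
  rw [div_le_one hub]
  exact le_csSup ⟨1, fun y hy => ubar_elem_le_one hW E y hy⟩ ⟨w, hw, rfl⟩

private lemma condProb_nonneg' {Pr : S → ℝ} (h : ∀ s, 0 ≤ Pr s) (E : Finset S) (s : S) :
    0 ≤ condProb Pr E s := by
  unfold condProb
  split
  · exact div_nonneg (h s) (probOf_nonneg' h E)
  · exact le_refl 0

private lemma sum_mul_ite' (p : S → ℝ) (A : Finset S) (c : ℝ) :
    ∑ s, p s * (if s ∈ A then c else 0) = probOf p A * c := by
  simp only [mul_ite, mul_zero]
  rw [Finset.sum_ite_mem, Finset.univ_inter, probOf, Finset.sum_mul]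

private lemma probOf_condProb_self' {Pr : S → ℝ} {E : Finset S} (h : 0 < probOf Pr E) :
    probOf (condProb Pr E) E = 1 := by
  unfold probOf condProb
  rw [Finset.sum_congr rfl fun s hs => if_pos hs, ← Finset.sum_div]
  exact div_self (ne_of_gt h)

private lemma regretAt_nonneg' {M : Finset (S → ℝ)} {f : S → ℝ} (hf : f ∈ M) (s : S) :
    0 ≤ regretAt M f s := by
  have hb : BddAbove ((fun g => g s) '' (M : Set (S → ℝ))) :=
    Set.Finite.bddAbove ((M.finite_toSet).image _)
  have : f s ≤ sSup ((fun g => g s) '' (M : Set (S → ℝ))) :=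
    le_csSup hb ⟨f, hf, rfl⟩
  simpa [regretAt, sub_nonneg] using this

private lemma wregret_updL_nonneg' {W : Set ((S → ℝ) × ℝ)} (hW : IsWeightedSet W)
    (A : Finset S) {M : Finset (S → ℝ)} {f : S → ℝ} (hf : f ∈ M) :
    0 ≤ wregret (updL W A) M f := by
  apply Real.sSup_nonneg
  rintro x ⟨w', ⟨w, hw, hpos, rfl⟩, rfl⟩
  exact mul_nonneg (alphaL_nonneg' hW A w.1)
    (Finset.sum_nonneg fun s _ =>
      mul_nonneg (condProb_nonneg' (hW.1 w hw).1.1 A s) (regretAt_nonneg' hf s))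

end Aux

/-- Axiom DC-M (under likelihood updating, for all menus) forces the
strict separability condition (second part of SEP): for every menu `M`, act `f ∈ M`,
and events `E`, `F` with `ūP(E∩F) > 0` and `ūP(Eᶜ∩F) > 0`, if the regret of `f`
conditional on `E∩F` is positive, then the regret conditional on `F` strictly exceeds
`sup_{(Pr,α) ∈ P⁺|ˡF} α·Pr(Eᶜ∩F)·regret^{P⁺|ˡ(Eᶜ∩F)}(f)`. -/
theorem stmt_19 [Fintype S] [Nonempty S] [DecidableEq S]
    (W : Set ((S → ℝ) × ℝ)) (hW : IsWeightedSet W)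
    (hdc : DCM updL W) :
    ∀ M : Finset (S → ℝ), M.Nonempty → ∀ f ∈ M, ∀ E F : Finset S,
      0 < ubar W (E ∩ F) → 0 < ubar W (Eᶜ ∩ F) →
      0 < wregret (updL W (E ∩ F)) M f →
      sSup {x | ∃ w ∈ updL W F, x =
          w.2 * probOf w.1 (Eᶜ ∩ F) * wregret (updL W (Eᶜ ∩ F)) M f} <
        wregret (updL W F) M f := by
  intro M hM f hfM E F hub1 hub2 hr1
  classical
  set r₂ := wregret (updL W (Eᶜ ∩ F)) M f with hr₂def
  have hr₂ : 0 ≤ r₂ := wregret_updL_nonneg' hW _ hfM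
  set g : S → ℝ :=
    fun s => sSup ((fun h => h s) '' (M : Set (S → ℝ))) - (if s ∈ Eᶜ ∩ F then r₂ else 0)
    with hgdef
  set Mt : Finset (S → ℝ) := insert g M with hMt
  have hmax : ∀ s : S, sSup ((fun h => h s) '' (Mt : Set (S → ℝ)))
      = sSup ((fun h => h s) '' (M : Set (S → ℝ))) := by
    intro s
    have hbdd : BddAbove ((fun h => h s) '' (M : Set (S → ℝ))) :=
      Set.Finite.bddAbove ((M.finite_toSet).image _)
    have hne : ((fun h => h s) '' (M : Set (S → ℝ))).Nonempty :=
      (Finset.coe_nonempty.mpr hM).image _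
    have hgle : g s ≤ sSup ((fun h => h s) '' (M : Set (S → ℝ))) := by
      have h0 : 0 ≤ (if s ∈ Eᶜ ∩ F then r₂ else 0) := by
        split <;> simp [hr₂]
      simp only [hgdef]
      exact sub_le_self _ h0
    rw [hMt, Finset.coe_insert, Set.image_insert_eq, csSup_insert hbdd hne]
    exact sup_eq_right.mpr hgle
  have hregf : regretAt Mt f = regretAt M f := by
    funext s
    unfold regretAt
    rw [hmax s]
  have hregg : ∀ s : S, regretAt Mt g s = (if s ∈ Eᶜ ∩ F then r₂ else 0) := by
    intro s
    unfold regretAt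
    rw [hmax s, hgdef]
    ring
  have hwf : ∀ X : Finset S, wregret (updL W X) Mt f = wregret (updL W X) M f := by
    intro X
    unfold wregret
    rw [hregf]
  -- the sum of regrets of g under any measure
  have hsumg : ∀ p : S → ℝ, ∑ s, p s * regretAt Mt g s = probOf p (Eᶜ ∩ F) * r₂ := by
    intro p
    rw [Finset.sum_congr rfl fun s _ => by rw [hregg s]]
    exact sum_mul_ite' p (Eᶜ ∩ F) r₂
  -- the wregret of g conditional on E ∩ F is ≤ 0
  have hwgA1 : wregret (updL W (E ∩ F)) Mt g ≤ 0 := by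
    apply Real.sSup_le _ le_rfl
    rintro x ⟨w', ⟨w, hw, hpos, rfl⟩, rfl⟩
    have hzero : probOf (condProb w.1 (E ∩ F)) (Eᶜ ∩ F) = 0 := by
      apply Finset.sum_eq_zero
      intro s hs
      have hsE : s ∉ E ∩ F := by
        rcases Finset.mem_inter.mp hs with ⟨hc, -⟩
        intro hmem
        exact (Finset.mem_compl.mp hc) (Finset.mem_inter.mp hmem).1
      simp [condProb, hsE]
    have := hsumg (condProb w.1 (E ∩ F))
    simp only [hzero, zero_mul] at this
    simp [this]
  -- the wregret of g conditional on Eᶜ ∩ F is ≤ r₂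
  have hwgA2 : wregret (updL W (Eᶜ ∩ F)) Mt g ≤ r₂ := by
    apply Real.sSup_le _ hr₂
    rintro x ⟨w', ⟨w, hw, hpos, rfl⟩, rfl⟩
    have hone : probOf (condProb w.1 (Eᶜ ∩ F)) (Eᶜ ∩ F) = 1 := probOf_condProb_self' hpos
    have := hsumg (condProb w.1 (Eᶜ ∩ F))
    simp only [hone, one_mul] at this
    show alphaL W (Eᶜ ∩ F) w.1 * (∑ s, condProb w.1 (Eᶜ ∩ F) s * regretAt Mt g s) ≤ r₂
    rw [this]
    calc alphaL W (Eᶜ ∩ F) w.1 * r₂ ≤ 1 * r₂ :=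
          mul_le_mul_of_nonneg_right (alphaL_le_one' hW hub2 w.1) hr₂
      _ = r₂ := one_mul r₂
  -- the wregret of g conditional on F is exactly the target sup
  have hwgF : wregret (updL W F) Mt g
      = sSup {x | ∃ w ∈ updL W F, x = w.2 * probOf w.1 (Eᶜ ∩ F) * r₂} := by
    unfold wregret
    congr 1
    ext x
    simp only [Set.mem_setOf_eq]
    constructor
    · rintro ⟨w', h, rfl⟩
      exact ⟨w', h, by rw [hsumg w'.1]; ring⟩
    · rintro ⟨w', h, rfl⟩
      exact ⟨w', h, by rw [hsumg w'.1]; ring⟩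
  -- apply DC-M with menu Mt and M' = {f, g}
  have hfMt : f ∈ Mt := Finset.mem_insert_of_mem hfM
  have hgMt : g ∈ Mt := Finset.mem_insert_self g M
  set M' : Finset (S → ℝ) := {f, g} with hM'
  have hfM' : f ∈ M' := by simp [hM']
  have hgM' : g ∈ M' := by simp [hM']
  have hsub : M' ⊆ Mt := by
    intro h hh
    rcases Finset.mem_insert.mp hh with rfl | hh
    · exact hfMt
    · rw [Finset.mem_singleton.mp hh]
      exact hgMt
  have hr1' : 0 < wregret (updL W (E ∩ F)) Mt f := by rw [hwf]; exact hr1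
  have hr2' : wregret (updL W (Eᶜ ∩ F)) Mt f = r₂ := hwf _
  have hgC1 : g ∈ choiceSet Mt (updL W (E ∩ F)) M' := by
    refine ⟨hgM', ?_⟩
    intro h hh
    rcases Finset.mem_insert.mp hh with rfl | hh
    · exact le_trans hwgA1 (le_of_lt hr1')
    · rw [Finset.mem_singleton.mp hh]
  have hgC2 : g ∈ choiceSet Mt (updL W (Eᶜ ∩ F)) M' := by
    refine ⟨hgM', ?_⟩
    intro h hh
    rcases Finset.mem_insert.mp hh with rfl | hh
    · rw [hr2']; exact hwgA2
    · rw [Finset.mem_singleton.mp hh]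
  have hfnC1 : f ∉ choiceSet Mt (updL W (E ∩ F)) M' := by
    rintro ⟨-, hall⟩
    have := hall g hgM'
    have h0 : wregret (updL W (E ∩ F)) Mt g ≤ 0 := hwgA1
    linarith
  obtain ⟨-, himp⟩ := hdc E F Mt M' ⟨g, hgMt⟩ hsub g hgM' f hfM' hgC1 hgC2
  have hfnF := himp hfnC1
  have hlt : wregret (updL W F) Mt g < wregret (updL W F) Mt f := by
    by_contra hle
    push_neg at hle
    apply hfnF
    refine ⟨hfM', ?_⟩
    intro h hh
    rcases Finset.mem_insert.mp hh with rfl | hh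
    · exact le_refl _
    · rw [Finset.mem_singleton.mp hh]
      exact hle
  rw [hwgF, hwf] at hlt
  exact hlt
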